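/- arXiv:2311.15214 — 4 statements merged into one kernel-verified Lean document; each statement's English description precedes it below -/
import Mathlib

section
/- Each inner iteration of the coordinate descent update does not decrease the N-Cut objective: if the m-th row of Y is replaced by the one-hot vector Q_c(r) where r maximizes L(k) = (y_k^{(k)})^T A y_k^{(k)}/(y_k^{(k)})^T D y_k^{(k)} − (y_k^{(0)})^T A y_k^{(0)}/(y_k^{(0)})^T D y_k^{(0)} over k ∈ {1,...,c}, then the objective ∑_{i=1}^c (y_i^T A y_i)/(y_i^T D y_i) of the updated matrix is greater than or equal to that of the original matrix. -/
open Matrix BigOperators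

/-- each inner iteration of coordinate descent does not decrease
the N-Cut objective: replacing the `m`-th row of `Y` (one-hot at `p`) by the
one-hot vector at `r`, where `r` maximizes `𝓛(k)`, yields an objective value
at least as large as the original one. -/
theorem fastcd_inner_step_monotone (n c : ℕ)
    (A D : Matrix (Fin n) (Fin n) ℝ)
    (hA_symm : A.IsSymm)
    (hA_nonneg : ∀ i j, 0 ≤ A i j)
    (hA_diag : ∀ i, A i i = 0)
    (hD : D = Matrix.diagonal (fun i => ∑ j, A i j))
    (Y : Matrix (Fin n) (Fin c) ℝ)
    (hY01 : ∀ i j, Y i j = 0 ∨ Y i j = 1)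
    (hYrow : ∀ i, ∃! j, Y i j = 1)
    (m : Fin n) (p : Fin c)
    (hmp : ∀ i, Y m i = if i = p then 1 else 0)
    (Yk : Fin c → Matrix (Fin n) (Fin c) ℝ)
    (hYk : ∀ k j i, Yk k j i = if j = m then (if i = k then 1 else 0) else Y j i)
    (Y0 : Matrix (Fin n) (Fin c) ℝ)
    (hY0 : ∀ j i, Y0 j i = if j = m then 0 else Y j i)
    (hdenk : ∀ k i : Fin c, 0 < (fun j => Yk k j i) ⬝ᵥ D *ᵥ (fun j => Yk k j i))
    (hden0 : ∀ i : Fin c, 0 < (fun j => Y0 j i) ⬝ᵥ D *ᵥ (fun j => Y0 j i))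
    (L : Fin c → ℝ)
    (hL : ∀ k, L k =
      ((fun j => Yk k j k) ⬝ᵥ A *ᵥ (fun j => Yk k j k)) /
        ((fun j => Yk k j k) ⬝ᵥ D *ᵥ (fun j => Yk k j k)) -
      ((fun j => Y0 j k) ⬝ᵥ A *ᵥ (fun j => Y0 j k)) /
        ((fun j => Y0 j k) ⬝ᵥ D *ᵥ (fun j => Y0 j k)))
    (r : Fin c)
    (hr : ∀ k, L k ≤ L r) :
    (∑ i : Fin c, ((fun j => Y j i) ⬝ᵥ A *ᵥ (fun j => Y j i)) /
        ((fun j => Y j i) ⬝ᵥ D *ᵥ (fun j => Y j i))) ≤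
    (∑ i : Fin c, ((fun j => Yk r j i) ⬝ᵥ A *ᵥ (fun j => Yk r j i)) /
        ((fun j => Yk r j i) ⬝ᵥ D *ᵥ (fun j => Yk r j i))) := by

  have hcol0 : ∀ (k i : Fin c), i ≠ k → (fun j => Yk k j i) = (fun j => Y0 j i) := by
    intro k i hik
    funext j
    rw [hYk, hY0]
    by_cases hj : j = m
    · simp [hj, hik]
    · simp [hj]
  have hcolY : ∀ i : Fin c, (fun j => Y j i) = (fun j => Yk p j i) := by
    intro i
    funext j
    rw [hYk]
    by_cases hj : j = m
    · subst hj; rw [hmp]; simp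
    · simp [hj]
  set f : (Fin n → ℝ) → ℝ := fun v => (v ⬝ᵥ A *ᵥ v) / (v ⬝ᵥ D *ᵥ v) with hf
  have hobj : ∀ k, (∑ i : Fin c, f (fun j => Yk k j i))
      = L k + ∑ i : Fin c, f (fun j => Y0 j i) := by
    intro k
    have h1 := Finset.add_sum_erase Finset.univ (fun i => f (fun j => Yk k j i)) (Finset.mem_univ k)
    have h2 := Finset.add_sum_erase Finset.univ (fun i => f (fun j => Y0 j i)) (Finset.mem_univ k)
    have h3 : (∑ i ∈ Finset.univ.erase k, f (fun j => Yk k j i))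
        = ∑ i ∈ Finset.univ.erase k, f (fun j => Y0 j i) := by
      apply Finset.sum_congr rfl
      intro i hi
      rw [hcol0 k i (Finset.mem_erase.mp hi).1]
    rw [← h1, ← h2, h3, hL k]
    ring
  calc (∑ i : Fin c, f (fun j => Y j i))
      = ∑ i : Fin c, f (fun j => Yk p j i) := by
        exact Finset.sum_congr rfl (fun i _ => by rw [hcolY i])
    _ = L p + ∑ i : Fin c, f (fun j => Y0 j i) := hobj p
    _ ≤ L r + ∑ i : Fin c, f (fun j => Y0 j i) := by linarith [hr p]
    _ = ∑ i : Fin c, f (fun j => Yk r j i) := (hobj r).symm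
end

section
/- Let B = λD + A be positive semidefinite with decomposition B = P^T P. Suppose cluster p contains exactly one sample m (so y_p = e_m). Define J(p) = (p_m^T p_m)/d_mm and, for k ≠ p, J(k) = (y_k^T B y_k + 2 y_k^T B e_m + e_m^T B e_m)/(y_k^T D y_k + d_mm) − (y_k^T B y_k)/(y_k^T D y_k). Then J(p) − J(k) = ‖(y_k^T D y_k) p_m − d_mm P y_k‖² / [d_mm (y_k^T D y_k)(d_mm + y_k^T D y_k)] ≥ 0 for all k ≠ p; hence moving the singleton sample to another cluster never increases the objective, so coordinate descent on the λ-shifted objective never empties a singleton cluster. -/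
open Matrix BigOperators

/-- with `B = λD + A = PᵀP` positive semidefinite and cluster `p`
a singleton `{m}`, the gap `J(p) − J(k)` equals a ratio of a squared norm over
a positive quantity, hence is nonnegative: a singleton cluster is never
emptied by the coordinate descent step on the λ-shifted objective. -/
theorem fastcd_no_empty_cluster (n q : ℕ)
    (A D : Matrix (Fin n) (Fin n) ℝ)
    (hA_symm : A.IsSymm)
    (hA_nonneg : ∀ i j, 0 ≤ A i j)
    (hA_diag : ∀ i, A i i = 0)
    (d : Fin n → ℝ)
    (hD : D = Matrix.diagonal d)
    (lam : ℝ)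
    (P : Matrix (Fin q) (Fin n) ℝ)
    (B : Matrix (Fin n) (Fin n) ℝ)
    (hB : B = lam • D + A)
    (hBP : B = Pᵀ * P)
    (m : Fin n)
    (hdm : 0 < d m)
    (pm : Fin q → ℝ)
    (hpm : pm = fun i => P i m)
    -- the `k`-th cluster column, `k ≠ p`: does not contain sample `m`
    (yk : Fin n → ℝ)
    (hyk01 : ∀ j, yk j = 0 ∨ yk j = 1)
    (hykm : yk m = 0)
    (hykden : 0 < yk ⬝ᵥ D *ᵥ yk)
    (Jp Jk : ℝ)
    (hJp : Jp = (pm ⬝ᵥ pm) / d m)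
    (hJk : Jk =
      (yk ⬝ᵥ B *ᵥ yk + 2 * (yk ⬝ᵥ B *ᵥ Pi.single m 1)
          + Pi.single m 1 ⬝ᵥ B *ᵥ Pi.single m 1) /
        (yk ⬝ᵥ D *ᵥ yk + d m) -
      (yk ⬝ᵥ B *ᵥ yk) / (yk ⬝ᵥ D *ᵥ yk)) :
    Jp - Jk =
      ((fun i => (yk ⬝ᵥ D *ᵥ yk) * pm i - d m * (P *ᵥ yk) i) ⬝ᵥ
        (fun i => (yk ⬝ᵥ D *ᵥ yk) * pm i - d m * (P *ᵥ yk) i)) /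
      (d m * (yk ⬝ᵥ D *ᵥ yk) * (d m + yk ⬝ᵥ D *ᵥ yk)) ∧
    0 ≤ Jp - Jk := by

  -- abbreviations
  set s := yk ⬝ᵥ D *ᵥ yk with hs
  have key : ∀ x y : Fin n → ℝ, x ⬝ᵥ B *ᵥ y = (P *ᵥ x) ⬝ᵥ (P *ᵥ y) := by
    intro x y
    rw [hBP, ← Matrix.mulVec_mulVec, Matrix.dotProduct_mulVec,
      Matrix.vecMul_transpose]
  have hPe : P *ᵥ Pi.single m 1 = pm := by
    rw [hpm]; ext i; simp [Matrix.mulVec_single]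
  have hc : Pi.single m 1 ⬝ᵥ B *ᵥ Pi.single m 1 = pm ⬝ᵥ pm := by
    rw [key, hPe]
  have hb : yk ⬝ᵥ B *ᵥ Pi.single m 1 = (P *ᵥ yk) ⬝ᵥ pm := by
    rw [key, hPe]
  have ha : yk ⬝ᵥ B *ᵥ yk = (P *ᵥ yk) ⬝ᵥ (P *ᵥ yk) := key yk yk
  set u := P *ᵥ yk with hu
  have hnum :
      ((fun i => s * pm i - d m * u i) ⬝ᵥ (fun i => s * pm i - d m * u i))
        = s * s * (pm ⬝ᵥ pm) - 2 * (s * (d m * (u ⬝ᵥ pm)))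
          + d m * d m * (u ⬝ᵥ u) := by
    have hfun : (fun i => s * pm i - d m * u i) = s • pm - (d m) • u := by
      ext i; simp
    rw [hfun]
    simp only [sub_dotProduct, dotProduct_sub,
      smul_dotProduct, dotProduct_smul, smul_eq_mul,
      dotProduct_comm pm u]
    ring
  have hgap : Jp - Jk =
      (s * s * (pm ⬝ᵥ pm) - 2 * (s * (d m * (u ⬝ᵥ pm)))
        + d m * d m * (u ⬝ᵥ u)) / (d m * s * (d m + s)) := by
    rw [hJp, hJk, hc, hb, ha]
    have h1 : d m ≠ 0 := ne_of_gt hdm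
    have h2 : s ≠ 0 := ne_of_gt hykden
    have h3 : s + d m ≠ 0 := ne_of_gt (by linarith)
    have h4 : d m + s ≠ 0 := ne_of_gt (by linarith)
    field_simp
    ring
  constructor
  · rw [hgap, hnum]
  · rw [hgap]
    apply div_nonneg
    · rw [← hnum]
      exact Finset.sum_nonneg fun i _ => mul_self_nonneg _
    · positivity
end

section
/- For vectors u, v ∈ ℝ^d and positive reals s, t: (u^T u)/s − [(v^T v + 2 v^T u + u^T u)/(t + s) − (v^T v)/t] = ‖t·u − s·v‖² / (s·t·(s+t)), and in particular the left-hand side is nonnegative. -/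
open Matrix BigOperators

/-- the key algebraic identity behind the empty-cluster theorem:
for vectors `u, v` and positive reals `s, t`,
`uᵀu/s − [(vᵀv + 2vᵀu + uᵀu)/(t+s) − vᵀv/t] = ‖t•u − s•v‖² / (s t (s+t)) ≥ 0`. -/
theorem key_ratio_identity (dim : ℕ)
    (u v : Fin dim → ℝ) (s t : ℝ) (hs : 0 < s) (ht : 0 < t) :
    (u ⬝ᵥ u) / s -
      ((v ⬝ᵥ v + 2 * (v ⬝ᵥ u) + u ⬝ᵥ u) / (t + s) - (v ⬝ᵥ v) / t) =
      ((t • u - s • v) ⬝ᵥ (t • u - s • v)) / (s * t * (s + t)) ∧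
    0 ≤ (u ⬝ᵥ u) / s -
      ((v ⬝ᵥ v + 2 * (v ⬝ᵥ u) + u ⬝ᵥ u) / (t + s) - (v ⬝ᵥ v) / t) := by
  have hexp : (t • u - s • v) ⬝ᵥ (t • u - s • v) =
      t * t * (u ⬝ᵥ u) - 2 * (s * t) * (v ⬝ᵥ u) + s * s * (v ⬝ᵥ v) := by
    simp [sub_dotProduct, dotProduct_sub, smul_dotProduct,
      dotProduct_smul, smul_eq_mul, dotProduct_comm v u]
    ring
  have hnn : 0 ≤ (t • u - s • v) ⬝ᵥ (t • u - s • v) :=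
    Finset.sum_nonneg fun i _ => mul_self_nonneg _
  have hst : 0 < s * t * (s + t) := by positivity
  have heq : (u ⬝ᵥ u) / s -
      ((v ⬝ᵥ v + 2 * (v ⬝ᵥ u) + u ⬝ᵥ u) / (t + s) - (v ⬝ᵥ v) / t) =
      ((t • u - s • v) ⬝ᵥ (t • u - s • v)) / (s * t * (s + t)) := by
    rw [hexp]
    field_simp
    ring
  exact ⟨heq, heq ▸ div_nonneg hnn hst.le⟩
end

section
/- If two candidate row assignments yield equal auxiliary objectives L(k), then the full N-Cut objectives of the corresponding matrices Y^{(k)} are equal; more generally, for any k, k', the difference of full objectives ∑_i ratios of Y^{(k)} minus that of Y^{(k')} equals L(k) − L(k'). -/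
open Matrix BigOperators

/-- for any candidates `k, k'`, the difference of the full N-Cut
objectives of `Y⁽ᵏ⁾` and `Y⁽ᵏ'⁾` equals `𝓛(k) − 𝓛(k')`; in particular equal
auxiliary objectives give equal full objectives. (Division by zero is `0` in
Lean, matching the convention `0/0 = 0`.) -/
theorem fastcd_objective_difference (n c : ℕ)
    (A D : Matrix (Fin n) (Fin n) ℝ)
    (hA_symm : A.IsSymm)
    (hA_nonneg : ∀ i j, 0 ≤ A i j)
    (hA_diag : ∀ i, A i i = 0)
    (hD : D = Matrix.diagonal (fun i => ∑ j, A i j))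
    (Y : Matrix (Fin n) (Fin c) ℝ)
    (hY01 : ∀ i j, Y i j = 0 ∨ Y i j = 1)
    (hYrow : ∀ i, ∃! j, Y i j = 1)
    (m : Fin n)
    (Yk : Fin c → Matrix (Fin n) (Fin c) ℝ)
    (hYk : ∀ k j i, Yk k j i = if j = m then (if i = k then 1 else 0) else Y j i)
    (Y0 : Matrix (Fin n) (Fin c) ℝ)
    (hY0 : ∀ j i, Y0 j i = if j = m then 0 else Y j i)
    -- denominators of nonzero columns are positive
    (hdenk : ∀ k i : Fin c, (fun j => Yk k j i) ≠ 0 →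
      0 < (fun j => Yk k j i) ⬝ᵥ D *ᵥ (fun j => Yk k j i))
    (hden0 : ∀ i : Fin c, (fun j => Y0 j i) ≠ 0 →
      0 < (fun j => Y0 j i) ⬝ᵥ D *ᵥ (fun j => Y0 j i))
    (L : Fin c → ℝ)
    (hL : ∀ k, L k =
      ((fun j => Yk k j k) ⬝ᵥ A *ᵥ (fun j => Yk k j k)) /
        ((fun j => Yk k j k) ⬝ᵥ D *ᵥ (fun j => Yk k j k)) -
      ((fun j => Y0 j k) ⬝ᵥ A *ᵥ (fun j => Y0 j k)) /
        ((fun j => Y0 j k) ⬝ᵥ D *ᵥ (fun j => Y0 j k)))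
    (obj : Fin c → ℝ)
    (hobj : ∀ k, obj k =
      ∑ i : Fin c, ((fun j => Yk k j i) ⬝ᵥ A *ᵥ (fun j => Yk k j i)) /
        ((fun j => Yk k j i) ⬝ᵥ D *ᵥ (fun j => Yk k j i))) :
    (∀ k k' : Fin c, obj k - obj k' = L k - L k') ∧
    (∀ k k' : Fin c, L k = L k' → obj k = obj k') := by
  have key : ∀ k : Fin c, obj k - L k =
      ∑ i : Fin c, ((fun j => Y0 j i) ⬝ᵥ A *ᵥ (fun j => Y0 j i)) /
        ((fun j => Y0 j i) ⬝ᵥ D *ᵥ (fun j => Y0 j i)) := by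
    intro k
    have hcol : ∀ i : Fin c, i ≠ k → (fun j => Yk k j i) = (fun j => Y0 j i) := by
      intro i hi
      funext j
      rw [hYk, hY0]
      by_cases h : j = m
      · simp [h, hi]
      · simp [h]
    rw [hobj, hL]
    rw [← Finset.add_sum_erase _ _ (Finset.mem_univ k),
        ← Finset.add_sum_erase _
          (fun i => ((fun j => Y0 j i) ⬝ᵥ A *ᵥ (fun j => Y0 j i)) /
            ((fun j => Y0 j i) ⬝ᵥ D *ᵥ (fun j => Y0 j i))) (Finset.mem_univ k)]
    have hs : ∑ i ∈ Finset.univ.erase k,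
        ((fun j => Yk k j i) ⬝ᵥ A *ᵥ (fun j => Yk k j i)) /
          ((fun j => Yk k j i) ⬝ᵥ D *ᵥ (fun j => Yk k j i)) =
        ∑ i ∈ Finset.univ.erase k,
        ((fun j => Y0 j i) ⬝ᵥ A *ᵥ (fun j => Y0 j i)) /
          ((fun j => Y0 j i) ⬝ᵥ D *ᵥ (fun j => Y0 j i)) := by
      apply Finset.sum_congr rfl
      intro i hi
      rw [hcol i (Finset.ne_of_mem_erase hi)]
    rw [hs]
    ring
  constructor
  · intro k k'
    have h1 := key k
    have h2 := key k'
    linarith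
  · intro k k' h
    have h1 := key k
    have h2 := key k'
    linarith
end
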